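/- arXiv:1504.07814 — 3 statements merged into one kernel-verified Lean document; each statement's English description precedes it below -/
import Mathlib

section
/- Let V and W be finite-dimensional representations of SU(2) on which the center acts by the same scalar. Then the inequality dim(V⊗V)[0] + dim(W⊗W)[0] ≥ 2·dim(V⊗W)[0] is an equality if and only if V ≅ W, i.e., if and only if the two multiplicity functions (equivalently, the two weight multiplicity functions) coincide. -/
/-- `wtDim ℓ k` is the dimension of the `k`-weight space (for the standard maximal torus
`S¹ ⊂ SU(2)`, acting by `z ↦ z^k`) of the representation `⊕ᵢ ℓ i · Sym^i(ℂ²)` of `SU(2)`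
encoded by its multiplicity function `ℓ : ℕ → ℕ`:
`dim E[k] = Σ_{i ≥ |k|, i ≡ k (mod 2)} ℓ i`. -/
noncomputable def wtDim (ℓ : ℕ → ℕ) (k : ℤ) : ℕ :=
  ∑ᶠ i : ℕ, if k.natAbs ≤ i ∧ k % 2 = (i : ℤ) % 2 then ℓ i else 0

/-- `tensorWtDim ℓ₁ ℓ₂ k` is the dimension of the `k`-weight space of the tensor product
of the `SU(2)`-representations encoded by `ℓ₁` and `ℓ₂`:
`dim (E⊗F)[k] = Σ_{j ∈ ℤ} dim E[j] · dim F[k-j]`. -/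
noncomputable def tensorWtDim (ℓ₁ ℓ₂ : ℕ → ℕ) (k : ℤ) : ℕ :=
  ∑ᶠ j : ℤ, wtDim ℓ₁ j * wtDim ℓ₂ (k - j)

/-!
Weight multiplicities are symmetric under `k ↦ -k`, so `dim(E⊗F)[0] = Σⱼ dim E[j] · dim F[j]` is
the standard inner product of the weight multiplicity vectors, and the inequality is
`‖v - w‖² ≥ 0`, an equality exactly when the weight multiplicities agree. These determine the
multiplicities, since `dim E[i] = ℓ i + dim E[i + 2]` for `i ≥ 0`.
-/

lemma two_mul_mul_le_mul_self_add_mul_self (a b : ℕ) : 2 * (a * b) ≤ a * a + b * b := by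
  nlinarith [sq_nonneg ((a : ℤ) - b)]

lemma mul_self_add_mul_self_eq_two_mul_mul_iff {a b : ℕ} :
    a * a + b * b = 2 * (a * b) ↔ a = b := by
  constructor
  · intro h
    nlinarith [sq_nonneg ((a : ℤ) - b)]
  · rintro rfl
    ring

lemma finsum_mul_self_add_finsum_mul_self_eq_two_mul_iff {α : Type*} {f g : α → ℕ}
    (hf : (Function.support f).Finite) (hg : (Function.support g).Finite) :
    ∑ᶠ a, f a * f a + ∑ᶠ a, g a * g a = 2 * ∑ᶠ a, f a * g a ↔ f = g := by
  set s := (hf.union hg).toFinset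
  have hfs : Function.support f ⊆ s := by simp [s]
  have hgs : Function.support g ⊆ s := by simp [s]
  rw [finsum_eq_sum_of_support_subset _ ((Function.support_mul_subset_left f f).trans hfs),
    finsum_eq_sum_of_support_subset _ ((Function.support_mul_subset_left g g).trans hgs),
    finsum_eq_sum_of_support_subset _ ((Function.support_mul_subset_left f g).trans hfs),
    Finset.mul_sum, ← Finset.sum_add_distrib, eq_comm, Finset.sum_eq_sum_iff_of_le
      fun a _ ↦ two_mul_mul_le_mul_self_add_mul_self (f a) (g a)]
  constructor
  · intro h
    funext a
    by_cases ha : a ∈ s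
    · exact mul_self_add_mul_self_eq_two_mul_mul_iff.1 (h a ha).symm
    · rw [Function.notMem_support.1 fun h ↦ ha (hfs h),
        Function.notMem_support.1 fun h ↦ ha (hgs h)]
  · rintro rfl a _
    exact (mul_self_add_mul_self_eq_two_mul_mul_iff.2 rfl).symm

lemma wtDim_neg (ℓ : ℕ → ℕ) (k : ℤ) : wtDim ℓ (-k) = wtDim ℓ k := by
  unfold wtDim
  congr! 3
  omega

lemma wtDim_eq_zero_of_lt_natAbs {ℓ : ℕ → ℕ} {N : ℕ} (hN : N ∈ upperBounds (Function.support ℓ))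
    {k : ℤ} (hk : N < k.natAbs) : wtDim ℓ k = 0 :=
  finsum_eq_zero_of_forall_eq_zero fun i ↦
    ite_eq_right_iff.2 fun hi ↦ Function.notMem_support.1 fun h ↦ by have := hN h; omega

lemma finite_support_wtDim {ℓ : ℕ → ℕ} (hℓ : (Function.support ℓ).Finite) :
    (Function.support (wtDim ℓ)).Finite := by
  obtain ⟨N, hN⟩ := hℓ.bddAbove
  refine (Set.finite_Icc (-(N : ℤ)) N).subset fun k hk ↦ ?_
  by_contra hkN
  exact hk (wtDim_eq_zero_of_lt_natAbs hN (by simp only [Set.mem_Icc] at hkN; omega))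

lemma wtDim_natCast {ℓ : ℕ → ℕ} (hℓ : (Function.support ℓ).Finite) (i : ℕ) :
    wtDim ℓ i = ℓ i + wtDim ℓ (i + 2) := by
  have hsplit : ∀ j : ℕ,
      (if (i : ℤ).natAbs ≤ j ∧ (i : ℤ) % 2 = (j : ℤ) % 2 then ℓ j else 0) =
        (if j = i then ℓ j else 0) +
          if ((i : ℤ) + 2).natAbs ≤ j ∧ ((i : ℤ) + 2) % 2 = (j : ℤ) % 2 then ℓ j else 0 := by
    intro j
    by_cases hji : j = i
    · subst hji
      rw [if_pos (by omega), if_pos rfl, if_neg (by omega), add_zero]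
    · rw [if_neg hji, zero_add]
      exact if_congr (by omega) rfl rfl
  unfold wtDim
  rw [finsum_congr hsplit, finsum_add_distrib, finsum_eq_single _ i fun j hj ↦ if_neg hj,
    if_pos rfl]
  · exact (Set.finite_singleton i).subset fun j hj ↦ by_contra fun hji ↦ hj (if_neg hji)
  · exact hℓ.subset fun j hj hj0 ↦ hj (by simp [hj0])

lemma wtDim_inj {ℓ₁ ℓ₂ : ℕ → ℕ} (h₁ : (Function.support ℓ₁).Finite)
    (h₂ : (Function.support ℓ₂).Finite) : wtDim ℓ₁ = wtDim ℓ₂ ↔ ℓ₁ = ℓ₂ := by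
  refine ⟨fun h ↦ funext fun i ↦ ?_, congrArg wtDim⟩
  have hi := congrFun h i
  rw [wtDim_natCast h₁, wtDim_natCast h₂, congrFun h] at hi
  exact Nat.add_right_cancel hi

lemma tensorWtDim_zero (ℓ₁ ℓ₂ : ℕ → ℕ) :
    tensorWtDim ℓ₁ ℓ₂ 0 = ∑ᶠ j, wtDim ℓ₁ j * wtDim ℓ₂ j := by
  simp only [tensorWtDim, zero_sub, wtDim_neg]

theorem cauchy_schwarz_same_central_character_equality_iff_general
    (ℓV ℓW : ℕ → ℕ)
    (hVfin : (Function.support ℓV).Finite) (hWfin : (Function.support ℓW).Finite) :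
    (tensorWtDim ℓV ℓV 0 + tensorWtDim ℓW ℓW 0 = 2 * tensorWtDim ℓV ℓW 0 ↔ ℓV = ℓW) ∧
    (ℓV = ℓW ↔ ∀ k : ℤ, wtDim ℓV k = wtDim ℓW k) := by
  have hwt := wtDim_inj hVfin hWfin
  refine ⟨?_, by rw [← hwt, funext_iff]⟩
  rw [tensorWtDim_zero, tensorWtDim_zero, tensorWtDim_zero, ← hwt]
  exact finsum_mul_self_add_finsum_mul_self_eq_two_mul_iff
    (finite_support_wtDim hVfin) (finite_support_wtDim hWfin)

/-- For representations `V`, `W` of SU(2) on which the center acts by the same scalar,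
the inequality `dim(V⊗V)[0] + dim(W⊗W)[0] ≥ 2·dim(V⊗W)[0]` is an equality
if and only if `V ≅ W`, i.e. iff the multiplicity functions coincide,
equivalently iff the weight multiplicity functions coincide. -/
theorem cauchy_schwarz_same_central_character_equality_iff
    (ℓV ℓW : ℕ → ℕ)
    (hVfin : (Function.support ℓV).Finite) (hWfin : (Function.support ℓW).Finite)
    (hpar : ∃ p : ℕ, ∀ i : ℕ, (ℓV i ≠ 0 ∨ ℓW i ≠ 0) → i % 2 = p) :
    (tensorWtDim ℓV ℓV 0 + tensorWtDim ℓW ℓW 0 = 2 * tensorWtDim ℓV ℓW 0 ↔ ℓV = ℓW) ∧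
    (ℓV = ℓW ↔ ∀ k : ℤ, wtDim ℓV k = wtDim ℓW k) :=
  cauchy_schwarz_same_central_character_equality_iff_general ℓV ℓW hVfin hWfin
end

section
/- Let V = Σ_{i≥0} n_i·Sym^{2i}(ℂ²) and W = Σ_{i≥1} m_i·Sym^{2i−1}(ℂ²) be finite-dimensional representations of SU(2) with opposite central characters, not both zero. Then the inequality is strict: dim(V⊗V)[0] + dim(W⊗W)[0] > 2·dim(V⊗W)[1]. -/
/-- Multiplicity function of `V = Σ_{i=0}^{d} n_i · Sym^{2i}(ℂ²)`
(trivial central character). -/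
def evenRep (d : ℕ) (n : ℕ → ℕ) : ℕ → ℕ :=
  fun j => if j % 2 = 0 ∧ j / 2 ≤ d then n (j / 2) else 0

/-- Multiplicity function of `W = Σ_{i=1}^{d} m_i · Sym^{2i-1}(ℂ²)`
(non-trivial central character). -/
def oddRep (d : ℕ) (m : ℕ → ℕ) : ℕ → ℕ :=
  fun j => if j % 2 = 1 ∧ (j + 1) / 2 ≤ d then m ((j + 1) / 2) else 0

open Function

lemma finsum_lt_finsum {α M : Type*} [AddCommMonoid M] [PartialOrder M]
    [IsOrderedCancelAddMonoid M] {f g : α → M} (hf : f.HasFiniteSupport)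
    (hg : g.HasFiniteSupport) (hle : f ≤ g) (hlt : ∃ i, f i < g i) :
    ∑ᶠ i, f i < ∑ᶠ i, g i := by
  classical
  let s := (hf.union hg).toFinset
  rw [finsum_eq_finsetSum_of_support_subset f (s := s) (by simp [s]),
    finsum_eq_finsetSum_of_support_subset g (s := s) (by simp [s])]
  obtain ⟨i, hi⟩ := hlt
  refine Finset.sum_lt_sum (fun j _ ↦ hle j) ⟨i, ?_, hi⟩
  by_contra! h
  simp_all [s]

lemma two_mul_mul_lt_mul_self_add_mul_self {a b : ℕ} (h : a ≠ b) :
    2 * (a * b) < a * a + b * b := by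
  rcases h.lt_or_gt with h | h <;> nlinarith

lemma two_mul_finsum_mul_lt_of_ne {α : Type*} {f g : α → ℕ} (hf : f.HasFiniteSupport)
    (hg : g.HasFiniteSupport) (hfg : f ≠ g) :
    2 * ∑ᶠ i, f i * g i < ∑ᶠ i, f i * f i + ∑ᶠ i, g i * g i := by
  obtain ⟨i, hi⟩ := ne_iff.mp hfg
  have hff : HasFiniteSupport fun i ↦ f i * f i := by fun_prop
  have hgg : HasFiniteSupport fun i ↦ g i * g i := by fun_prop
  have hfg' : HasFiniteSupport fun i ↦ 2 * (f i * g i) := by fun_prop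
  rw [mul_finsum, ← finsum_add_distrib hff hgg]
  refine finsum_lt_finsum hfg' (hff.add hgg) (fun j ↦ ?_)
    ⟨i, two_mul_mul_lt_mul_self_add_mul_self hi⟩
  simpa only [sq, mul_assoc] using two_mul_le_add_sq (f j) (g j)

lemma Function.Periodic.eq_zero_of_hasFiniteSupport {M : Type*} [Zero M] {f : ℤ → M} {c : ℤ}
    (hf : Periodic f c) (hc : c ≠ 0) (hfin : f.HasFiniteSupport) : f = 0 := by
  ext j
  by_contra hj
  refine Set.infinite_of_injective_forall_mem (f := fun k : ℤ ↦ j + k * c) ?_ (fun k ↦ ?_) hfin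
  · intro k l hkl
    simpa [hc] using hkl
  · have hk := hf.int_mul k j
    rw [Int.cast_id] at hk
    rwa [mem_support, hk]

lemma Function.Even.periodic_two_of_forall_eq_one_sub {M : Type*} {a b : ℤ → M}
    (ha : a.Even) (hb : b.Even) (h : ∀ j, a j = b (1 - j)) : Periodic b 2 := fun j ↦ by
  calc b (j + 2) = a (-1 - j) := by rw [h]; ring_nf
    _ = a (1 + j) := by rw [← ha]; ring_nf
    _ = b j := by rw [h, ← hb]; ring_nf

lemma wtDim_even (ℓ : ℕ → ℕ) : (wtDim ℓ).Even := fun k ↦ by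
  simp only [wtDim, Int.natAbs_neg, Int.neg_emod_two]

lemma hasFiniteSupport_wtDim {ℓ : ℕ → ℕ} (hℓ : ℓ.HasFiniteSupport) :
    (wtDim ℓ).HasFiniteSupport := by
  obtain ⟨N, hN⟩ := hℓ.bddAbove
  refine (Set.finite_Icc (-(N : ℤ)) N).subset fun k hk ↦ ?_
  by_contra hkN
  refine hk (finsum_eq_zero_of_forall_eq_zero fun i ↦ ite_eq_right_iff.mpr fun hi ↦ ?_)
  by_contra hℓi
  have := hN hℓi
  simp only [Set.mem_Icc, not_and_or, not_le] at hkN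
  omega

lemma le_wtDim {ℓ : ℕ → ℕ} (hℓ : ℓ.HasFiniteSupport) {k : ℤ} {i : ℕ} (hk : k.natAbs ≤ i)
    (hpar : k % 2 = (i : ℤ) % 2) : ℓ i ≤ wtDim ℓ k := by
  have hfin : HasFiniteSupport fun i ↦ if k.natAbs ≤ i ∧ k % 2 = (i : ℤ) % 2 then ℓ i else 0 :=
    hℓ.subset fun i hi ↦ by simp_all [mem_support]
  calc ℓ i = if k.natAbs ≤ i ∧ k % 2 = (i : ℤ) % 2 then ℓ i else 0 := (if_pos ⟨hk, hpar⟩).symm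
    _ ≤ wtDim ℓ k := single_le_finsum i hfin fun _ ↦ Nat.zero_le _

lemma tensorWtDim_self_zero (ℓ : ℕ → ℕ) :
    tensorWtDim ℓ ℓ 0 = ∑ᶠ j, wtDim ℓ j * wtDim ℓ j :=
  finsum_congr fun j ↦ by rw [zero_sub, wtDim_even]

lemma hasFiniteSupport_evenRep (d : ℕ) (n : ℕ → ℕ) : (evenRep d n).HasFiniteSupport :=
  (Set.finite_Iic (2 * d)).subset fun j hj ↦ by
    by_contra hjd
    exact hj (if_neg (by simp only [Set.mem_Iic] at hjd; omega))

lemma hasFiniteSupport_oddRep (d : ℕ) (m : ℕ → ℕ) : (oddRep d m).HasFiniteSupport :=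
  (Set.finite_Iic (2 * d)).subset fun j hj ↦ by
    by_contra hjd
    exact hj (if_neg (by simp only [Set.mem_Iic] at hjd; omega))

lemma le_wtDim_evenRep_zero {d i : ℕ} (n : ℕ → ℕ) (hi : i ≤ d) :
    n i ≤ wtDim (evenRep d n) 0 := by
  have hrep : evenRep d n (2 * i) = n i := by simp [evenRep, hi]
  simpa [hrep] using le_wtDim (hasFiniteSupport_evenRep d n) (k := 0) (i := 2 * i) (by simp)
    (by omega)

lemma le_wtDim_oddRep_one {d i : ℕ} (m : ℕ → ℕ) (hi₁ : 1 ≤ i) (hi : i ≤ d) :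
    m i ≤ wtDim (oddRep d m) 1 := by
  have hrep : oddRep d m (2 * i - 1) = m i := by
    simp only [oddRep]
    rw [if_pos (by omega), show (2 * i - 1 + 1) / 2 = i by omega]
  simpa [hrep] using le_wtDim (hasFiniteSupport_oddRep d m) (k := 1) (i := 2 * i - 1)
    (by simp; omega) (by omega)

/-- For `V = Σ_{i=0}^{d} n_i·Sym^{2i}(ℂ²)` and `W = Σ_{i=1}^{d} m_i·Sym^{2i-1}(ℂ²)`
not both zero, the Cauchy–Schwarz inequality for opposite central characters is strict:
`dim(V⊗V)[0] + dim(W⊗W)[0] > 2·dim(V⊗W)[1]`. -/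
theorem cauchy_schwarz_opposite_central_characters_strict (d : ℕ) (n m : ℕ → ℕ)
    (hne : (∃ i, i ≤ d ∧ n i ≠ 0) ∨ (∃ i, 1 ≤ i ∧ i ≤ d ∧ m i ≠ 0)) :
    2 * tensorWtDim (evenRep d n) (oddRep d m) 1 <
      tensorWtDim (evenRep d n) (evenRep d n) 0 +
        tensorWtDim (oddRep d m) (oddRep d m) 0 := by
  set a := wtDim (evenRep d n)
  set b := wtDim (oddRep d m)
  have ha : a.HasFiniteSupport := hasFiniteSupport_wtDim (hasFiniteSupport_evenRep d n)
  have hb : b.HasFiniteSupport := hasFiniteSupport_wtDim (hasFiniteSupport_oddRep d m)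
  have hpos : a 0 ≠ 0 ∨ b 1 ≠ 0 := by
    rcases hne with ⟨i, hi, hni⟩ | ⟨i, hi₁, hi, hmi⟩
    · exact .inl (Nat.pos_of_ne_zero hni |>.trans_le (le_wtDim_evenRep_zero n hi)).ne'
    · exact .inr (Nat.pos_of_ne_zero hmi |>.trans_le (le_wtDim_oddRep_one m hi₁ hi)).ne'
  have hab : a ≠ fun j ↦ b (1 - j) := by
    intro h
    have hb₀ : b = 0 := ((wtDim_even _).periodic_two_of_forall_eq_one_sub (wtDim_even _)
      (congrFun h)).eq_zero_of_hasFiniteSupport two_ne_zero hb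
    have ha₀ : a 0 = b 1 := congrFun h 0
    simp [ha₀, hb₀] at hpos
  rw [tensorWtDim_self_zero, tensorWtDim_self_zero,
    ← finsum_comp_equiv (Equiv.subLeft 1) (f := fun j ↦ b j * b j)]
  have hb₁ : (fun j : ℤ ↦ b (1 - j)).HasFiniteSupport :=
    hb.fun_comp_of_injective (g := (1 - ·)) (Equiv.subLeft 1).injective
  exact two_mul_finsum_mul_lt_of_ne ha hb₁ hab
end

section
/- Let V = Σ_{i=0}^{d} n_i·Sym^{2i}(ℂ²) and W = Σ_{i=1}^{d} m_i·Sym^{2i−1}(ℂ²) be two finite-dimensional representations of SU(2), and set a_i = Σ_{j=i}^{d} (n_j − m_j) for 1 ≤ i ≤ d. Assume a_i ≤ 0 and a_i + m_i ≥ 0 for all 1 ≤ i ≤ d (equivalently, W ≥ V⁻ and V ≥ W⁻ in the Young order on partitions). Then dim(V⊗V)[0] + dim(W⊗W)[0] − 2·dim(V⊗W)[1] ≤ (m_1² + ⋯ + m_d²) + (a_1 + n_0)². -/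
/-- The quantity `a_i = Σ_{j=i}^{d} (n_j − m_j)` (an empty sum when `i > d`). -/
def aCoeff (d : ℕ) (n m : ℕ → ℕ) (i : ℕ) : ℤ :=
  ∑ j ∈ Finset.Icc i d, ((n j : ℤ) - (m j : ℤ))

open Finset Function

theorem finsum_eq_finsum_comp_of_support_subset_range {α β M : Type*} [AddCommMonoid M]
    {f : β → M} {g : α → β} (hg : Injective g) (hf : support f ⊆ Set.range g) :
    ∑ᶠ b, f b = ∑ᶠ a, f (g a) := by
  rw [← finsum_mem_range hg, ← finsum_mem_inter_support, Set.inter_eq_right.2 hf,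
    finsum_mem_support]

theorem finsum_ite_mem_eq_sum {α M : Type*} [AddCommMonoid M] (s : Finset α) (f : α → M)
    [DecidablePred (· ∈ s)] :
    ∑ᶠ a, (if a ∈ s then f a else 0) = ∑ a ∈ s, f a := by
  rw [← finsum_mem_coe_finset]
  exact finsum_congr fun a => by rw [finsum_eq_if]; rfl

theorem sum_Icc_neg_eq_add_sum_Icc {M : Type*} [AddCommMonoid M] (F : ℤ → M) (d : ℕ) :
    ∑ k ∈ Icc (-(d : ℤ)) d, F k = F 0 + ∑ k ∈ Icc 1 d, (F k + F (-k)) := by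
  induction d with
  | zero => simp
  | succ d ih =>
    have hIcc : Icc (-((d + 1 : ℕ) : ℤ)) (d + 1 : ℕ)
        = insert (-((d + 1 : ℕ) : ℤ)) (insert ((d + 1 : ℕ) : ℤ) (Icc (-(d : ℤ)) d)) := by
      ext x; simp only [mem_Icc, mem_insert]; omega
    rw [hIcc, sum_insert (by simp only [mem_insert, mem_Icc]; omega),
      sum_insert (by simp only [mem_Icc]; omega), ih, sum_Icc_succ_top (by omega)]
    abel

theorem finsum_int_eq_add_sum_Icc {M : Type*} [AddCommMonoid M] {F : ℤ → M} (d : ℕ)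
    (hF : ∀ k, d < k.natAbs → F k = 0) :
    ∑ᶠ k, F k = F 0 + ∑ k ∈ Icc 1 d, (F k + F (-k)) := by
  rw [finsum_eq_sum_of_support_subset F (s := Icc (-(d : ℤ)) d), sum_Icc_neg_eq_add_sum_Icc]
  intro k hk
  by_contra h
  exact hk (hF k (by simp only [coe_Icc, Set.mem_Icc] at h; omega))

def tailSum (f : ℕ → ℕ) (d k : ℕ) : ℕ := ∑ j ∈ Icc k d, f j

theorem tailSum_eq_zero_of_lt {f : ℕ → ℕ} {d k : ℕ} (h : d < k) : tailSum f d k = 0 := by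
  rw [tailSum, Icc_eq_empty (by omega), sum_empty]

theorem tailSum_eq_add_tailSum_succ {f : ℕ → ℕ} {d k : ℕ} (h : k ≤ d) :
    tailSum f d k = f k + tailSum f d (k + 1) := by
  rw [tailSum, tailSum, ← insert_Icc_add_one_left_eq_Icc h, sum_insert (by simp)]

theorem wtDim_evenRep (d : ℕ) (n : ℕ → ℕ) (k : ℤ) :
    wtDim (evenRep d n) k = if k % 2 = 0 then tailSum n d (k.natAbs / 2) else 0 := by
  split_ifs with hk
  · rw [wtDim, finsum_eq_finsum_comp_of_support_subset_range (g := (2 * ·))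
      (fun _ _ h => by simpa using h), tailSum, ← finsum_ite_mem_eq_sum]
    · refine finsum_congr fun j => ?_
      simp only [evenRep, mem_Icc]
      split_ifs <;> first | rfl | omega | (congr 1; omega)
    · intro i hi
      simp only [mem_support, evenRep] at hi
      exact ⟨i / 2, show 2 * (i / 2) = i by split_ifs at hi <;> omega⟩
  · refine finsum_eq_zero_of_forall_eq_zero fun i => ?_
    simp only [evenRep]
    split_ifs <;> omega

theorem wtDim_oddRep (d : ℕ) (m : ℕ → ℕ) (k : ℤ) :
    wtDim (oddRep d m) k = if k % 2 = 1 then tailSum m d ((k.natAbs + 1) / 2) else 0 := by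
  split_ifs with hk
  · rw [wtDim, finsum_eq_finsum_comp_of_support_subset_range (g := (2 * · - 1))
      (fun a b h => by dsimp only at h; omega), tailSum, ← finsum_ite_mem_eq_sum]
    · refine finsum_congr fun j => ?_
      simp only [oddRep, mem_Icc]
      split_ifs <;> first | rfl | omega | (congr 1; omega)
    · intro i hi
      simp only [mem_support, oddRep] at hi
      exact ⟨(i + 1) / 2, show 2 * ((i + 1) / 2) - 1 = i by split_ifs at hi <;> omega⟩
  · refine finsum_eq_zero_of_forall_eq_zero fun i => ?_
    simp only [oddRep]
    split_ifs <;> omega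

theorem wtDim_evenRep_of_natAbs_eq {d : ℕ} {n : ℕ → ℕ} {k : ℤ} {j : ℕ}
    (h : k.natAbs = 2 * j) : wtDim (evenRep d n) k = tailSum n d j := by
  rw [wtDim_evenRep, if_pos (by omega)]
  congr 1
  omega

theorem wtDim_oddRep_of_natAbs_eq {d : ℕ} {m : ℕ → ℕ} {k : ℤ} {j : ℕ}
    (h : k.natAbs + 1 = 2 * j) : wtDim (oddRep d m) k = tailSum m d j := by
  rw [wtDim_oddRep, if_pos (by omega)]
  congr 1
  omega

theorem tensorWtDim_eq_finsum_comp {ℓ₁ ℓ₂ : ℕ → ℕ} {g : ℤ → ℤ} (hg : Injective g)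
    (h : support (wtDim ℓ₁) ⊆ Set.range g) (k : ℤ) :
    tensorWtDim ℓ₁ ℓ₂ k = ∑ᶠ i, wtDim ℓ₁ (g i) * wtDim ℓ₂ (k - g i) :=
  finsum_eq_finsum_comp_of_support_subset_range hg fun _ hj =>
    h (left_ne_zero_of_mul (mem_support.1 hj))

theorem support_wtDim_evenRep_subset (d : ℕ) (n : ℕ → ℕ) :
    support (wtDim (evenRep d n)) ⊆ Set.range (2 * ·) := by
  intro j hj
  rw [mem_support, wtDim_evenRep] at hj
  exact ⟨j / 2, show 2 * (j / 2) = j by split_ifs at hj <;> omega⟩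

theorem support_wtDim_oddRep_subset (d : ℕ) (m : ℕ → ℕ) :
    support (wtDim (oddRep d m)) ⊆ Set.range (2 * · - 1) := by
  intro j hj
  rw [mem_support, wtDim_oddRep] at hj
  exact ⟨(j + 1) / 2, show 2 * ((j + 1) / 2) - 1 = j by split_ifs at hj <;> omega⟩

theorem tensorWtDim_evenRep_evenRep_zero (d : ℕ) (n : ℕ → ℕ) :
    tensorWtDim (evenRep d n) (evenRep d n) 0
      = tailSum n d 0 ^ 2 + 2 * ∑ k ∈ Icc 1 d, tailSum n d k ^ 2 := by
  rw [tensorWtDim_eq_finsum_comp (fun a b h => by omega) (support_wtDim_evenRep_subset d n),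
    finsum_int_eq_add_sum_Icc d, mul_sum]
  · congr 1
    · repeat rw [wtDim_evenRep_of_natAbs_eq (j := 0) ?_]
      all_goals first | omega | ring
    · refine sum_congr rfl fun k hk => ?_
      rw [mem_Icc] at hk
      repeat rw [wtDim_evenRep_of_natAbs_eq (j := k) ?_]
      all_goals first | omega | ring
  · intro k hk
    rw [wtDim_evenRep_of_natAbs_eq (j := k.natAbs) (by omega), tailSum_eq_zero_of_lt hk, zero_mul]

theorem tensorWtDim_oddRep_oddRep_zero (d : ℕ) (m : ℕ → ℕ) :
    tensorWtDim (oddRep d m) (oddRep d m) 0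
      = tailSum m d 1 ^ 2 + ∑ k ∈ Icc 1 d, (tailSum m d k ^ 2 + tailSum m d (k + 1) ^ 2) := by
  rw [tensorWtDim_eq_finsum_comp (fun a b h => by omega) (support_wtDim_oddRep_subset d m),
    finsum_int_eq_add_sum_Icc d]
  · congr 1
    · repeat rw [wtDim_oddRep_of_natAbs_eq (j := 1) ?_]
      all_goals first | omega | ring
    · refine sum_congr rfl fun k hk => ?_
      rw [mem_Icc] at hk
      rw [wtDim_oddRep_of_natAbs_eq (k := 2 * k - 1) (j := k) ?_,
        wtDim_oddRep_of_natAbs_eq (k := 0 - (2 * k - 1)) (j := k) ?_,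
        wtDim_oddRep_of_natAbs_eq (k := 2 * -k - 1) (j := k + 1) ?_,
        wtDim_oddRep_of_natAbs_eq (k := 0 - (2 * -k - 1)) (j := k + 1) ?_]
      all_goals first | omega | ring
  · intro k hk
    rw [wtDim_oddRep, if_pos (by omega), tailSum_eq_zero_of_lt (by omega), zero_mul]

theorem tensorWtDim_evenRep_oddRep_one (d : ℕ) (n m : ℕ → ℕ) :
    tensorWtDim (evenRep d n) (oddRep d m) 1
      = tailSum n d 0 * tailSum m d 1
        + ∑ k ∈ Icc 1 d, tailSum n d k * (tailSum m d k + tailSum m d (k + 1)) := by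
  rw [tensorWtDim_eq_finsum_comp (fun a b h => by omega) (support_wtDim_evenRep_subset d n),
    finsum_int_eq_add_sum_Icc d]
  · congr 1
    · rw [wtDim_evenRep_of_natAbs_eq (j := 0) ?_, wtDim_oddRep_of_natAbs_eq (j := 1) ?_]
      all_goals omega
    · refine sum_congr rfl fun k hk => ?_
      rw [mem_Icc] at hk
      rw [wtDim_evenRep_of_natAbs_eq (j := k) ?_, wtDim_evenRep_of_natAbs_eq (j := k) ?_,
        wtDim_oddRep_of_natAbs_eq (k := 1 - 2 * k) (j := k) ?_,
        wtDim_oddRep_of_natAbs_eq (k := 1 - 2 * -k) (j := k + 1) ?_]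
      all_goals first | omega | ring
  · intro k hk
    rw [wtDim_evenRep_of_natAbs_eq (j := k.natAbs) (by omega), tailSum_eq_zero_of_lt hk, zero_mul]

theorem aCoeff_eq_sub (d : ℕ) (n m : ℕ → ℕ) (i : ℕ) :
    aCoeff d n m i = tailSum n d i - tailSum m d i := by
  rw [aCoeff, sum_sub_distrib, tailSum, tailSum]
  push_cast
  rfl

theorem tailSum_interlace_of_aCoeff {d : ℕ} {n m : ℕ → ℕ} {k : ℕ} (hk : k ≤ d)
    (h₁ : aCoeff d n m k ≤ 0) (h₂ : 0 ≤ aCoeff d n m k + m k) :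
    tailSum m d (k + 1) ≤ tailSum n d k ∧ tailSum n d k ≤ tailSum m d k := by
  rw [aCoeff_eq_sub] at h₁ h₂
  have := tailSum_eq_add_tailSum_succ (f := m) hk
  omega

theorem interlaced_quadratic_le {R : Type*} [CommRing R] [LinearOrder R] [IsStrictOrderedRing R]
    (d : ℕ) (t s : ℕ → R) (h : ∀ k ∈ Icc 1 d, s (k + 1) ≤ t k ∧ t k ≤ s k) :
    (t 0 ^ 2 + 2 * ∑ k ∈ Icc 1 d, t k ^ 2) + (s 1 ^ 2 + ∑ k ∈ Icc 1 d, (s k ^ 2 + s (k + 1) ^ 2))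
        - 2 * (t 0 * s 1 + ∑ k ∈ Icc 1 d, t k * (s k + s (k + 1))) ≤
      ∑ k ∈ Icc 1 d, (s k - s (k + 1)) ^ 2 + (t 0 - s 1) ^ 2 := by
  have hterm :
      ∑ k ∈ Icc 1 d, (2 * t k ^ 2 + (s k ^ 2 + s (k + 1) ^ 2) - 2 * (t k * (s k + s (k + 1))))
        ≤ ∑ k ∈ Icc 1 d, (s k - s (k + 1)) ^ 2 :=
    sum_le_sum fun k hk => by
      nlinarith [mul_nonneg (sub_nonneg.2 (h k hk).1) (sub_nonneg.2 (h k hk).2)]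
  rw [sum_sub_distrib, sum_add_distrib, ← mul_sum, ← mul_sum] at hterm
  linear_combination hterm

/-- For `V = Σ_{i=0}^{d} n_i·Sym^{2i}(ℂ²)` and `W = Σ_{i=1}^{d} m_i·Sym^{2i-1}(ℂ²)` with
`a_i = Σ_{j=i}^{d} (n_j − m_j)` satisfying `a_i ≤ 0` and `a_i + m_i ≥ 0` for `1 ≤ i ≤ d`
(i.e. `W ≥ V⁻` and `V ≥ W⁻` in the Young order),
`dim(V⊗V)[0] + dim(W⊗W)[0] − 2·dim(V⊗W)[1] ≤ (m_1² + ⋯ + m_d²) + (a_1+n_0)²`. -/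
theorem upper_bound_young_order (d : ℕ) (n m : ℕ → ℕ)
    (ha : ∀ i, 1 ≤ i → i ≤ d → aCoeff d n m i ≤ 0 ∧ 0 ≤ aCoeff d n m i + (m i : ℤ)) :
    (tensorWtDim (evenRep d n) (evenRep d n) 0 : ℤ)
        + tensorWtDim (oddRep d m) (oddRep d m) 0
        - 2 * tensorWtDim (evenRep d n) (oddRep d m) 1 ≤
      (∑ i ∈ Finset.Icc 1 d, (m i : ℤ) ^ 2) + (aCoeff d n m 1 + (n 0 : ℤ)) ^ 2 := by
  have hm : ∀ i ∈ Icc 1 d, (m i : ℤ) ^ 2 = ((tailSum m d i : ℤ) - tailSum m d (i + 1)) ^ 2 := by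
    intro i hi
    rw [tailSum_eq_add_tailSum_succ (mem_Icc.1 hi).2]
    push_cast
    ring
  have h₀ : aCoeff d n m 1 + n 0 = tailSum n d 0 - tailSum m d 1 := by
    rw [aCoeff_eq_sub, tailSum_eq_add_tailSum_succ (Nat.zero_le d)]
    push_cast
    ring
  rw [tensorWtDim_evenRep_evenRep_zero, tensorWtDim_oddRep_oddRep_zero,
    tensorWtDim_evenRep_oddRep_one, sum_congr rfl hm, h₀]
  push_cast
  refine interlaced_quadratic_le d (fun k => (tailSum n d k : ℤ)) (fun k => (tailSum m d k : ℤ))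
    fun k hk => ?_
  obtain ⟨hk₁, hk₂⟩ := mem_Icc.1 hk
  exact_mod_cast tailSum_interlace_of_aCoeff hk₂ (ha k hk₁ hk₂).1 (ha k hk₁ hk₂).2
end
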